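/- Let M and K be complex separable Hilbert spaces and let T = [[D, C], [C*, F]] : M ⊕ K → M ⊕ K (with D = D* ∈ B(M), F = F* ∈ B(K), C ∈ B(K, M)) be both selfadjoint and unitary. Then for every z ∈ Z := ℂ ∖ ((−∞,−1] ∪ [1,+∞)) the operators I − zF and I + zD are boundedly invertible, the transfer function satisfies D + zC(I − zF)⁻¹C* = (zI + D)(I + zD)⁻¹, and this function takes unitary values at every point ξ of the unit circle with ξ ≠ ±1. -/

import Mathlib

open Complex ContinuousLinearMap

noncomputable section

variable {M K : Type*} [NormedAddCommGroup M] [InnerProductSpace ℂ M] [CompleteSpace M]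
  [TopologicalSpace.SeparableSpace M]
  [NormedAddCommGroup K] [InnerProductSpace ℂ K] [CompleteSpace K]
  [TopologicalSpace.SeparableSpace K]

/-- The domain `Z = ℂ ∖ ((−∞,−1] ∪ [1,+∞))`. -/
def Zdom : Set ℂ := {z : ℂ | z ∉ (fun x : ℝ => (x : ℂ)) '' (Set.Iic (-1) ∪ Set.Ici 1)}

/-- The `2×2` block operator `[[D, C], [B, F]]` on the Hilbert direct sum `M ⊕ K`. -/
def blockOp (D : M →L[ℂ] M) (C : K →L[ℂ] M) (B : M →L[ℂ] K) (F : K →L[ℂ] K) :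
    WithLp 2 (M × K) →L[ℂ] WithLp 2 (M × K) :=
  ((WithLp.prodContinuousLinearEquiv 2 ℂ M K).symm : (M × K) →L[ℂ] WithLp 2 (M × K)) ∘L
    ((D ∘L ContinuousLinearMap.fst ℂ M K + C ∘L ContinuousLinearMap.snd ℂ M K).prod
      (B ∘L ContinuousLinearMap.fst ℂ M K + F ∘L ContinuousLinearMap.snd ℂ M K)) ∘L
    ((WithLp.prodContinuousLinearEquiv 2 ℂ M K) : WithLp 2 (M × K) →L[ℂ] (M × K))

/-! Since `T` is selfadjoint and unitary, `T² = 1`, which in blocks reads `D² + CC* = 1`,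
`DC + CF = 0` and `C*C + F² = 1`. The outer relations make `D` and `F` contractions, so their
spectra lie in `[-1, 1]` and `I − zF`, `I + zD` are invertible for `z ∈ Z`. The middle relation
intertwines: `C(I − zF) = (I + zD)C`, so `C(I − zF)⁻¹C* = (I + zD)⁻¹(I − D²)` and the transfer
function collapses to `(zI + D)(I + zD)⁻¹`. For `|ξ| = 1` this equals `ξ A* A⁻¹` with
`A = I + ξD` normal, hence it is unitary. -/

lemma ofReal_mem_Zdom_iff {x : ℝ} : (x : ℂ) ∈ Zdom ↔ |x| < 1 := by
  simp only [Zdom, Set.mem_ofPred_eq, Set.mem_image, ofReal_inj, exists_eq_right, Set.mem_union,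
    Set.mem_Iic, Set.mem_Ici, not_or, not_le, abs_lt]

lemma mem_Zdom_of_norm_eq_one {ξ : ℂ} (hξ : ‖ξ‖ = 1) (h₁ : ξ ≠ 1) (h₂ : ξ ≠ -1) : ξ ∈ Zdom := by
  rintro ⟨x, -, rfl⟩
  rw [norm_real, Real.norm_eq_abs] at hξ
  rcases abs_eq zero_le_one |>.mp hξ with rfl | rfl
  exacts [h₁ ofReal_one, h₂ (by push_cast; rfl)]

lemma IsSelfAdjoint.isUnit_one_sub_smul {A : Type*} [CStarAlgebra A] {a : A}
    (ha : IsSelfAdjoint a) (ha₁ : ‖a‖ ≤ 1) {z : ℂ} (hz : z ∈ Zdom) : IsUnit (1 - z • a) := by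
  nontriviality A
  rcases eq_or_ne z 0 with rfl | hz₀
  · simp
  by_contra h
  have hspec : z⁻¹ ∈ spectrum ℂ a := by
    rw [← spectrum.smul_mem_smul_iff (r := Units.mk0 z hz₀), spectrum.mem_iff]
    simpa [Units.smul_def, hz₀, Algebra.algebraMap_eq_smul_one] using h
  set t := (z⁻¹).re
  have ht : z⁻¹ = t := ha.mem_spectrum_eq_re hspec
  have ht₁ : |t| ≤ 1 := by
    have := (spectrum.norm_le_norm_of_mem hspec).trans ha₁
    rwa [ht, norm_real, Real.norm_eq_abs] at this
  have ht₀ : t ≠ 0 := by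
    intro h₀
    simp [h₀, hz₀] at ht
  rw [← inv_inv z, ht, ← ofReal_inv, ofReal_mem_Zdom_iff, abs_inv,
    inv_lt_one₀ (abs_pos.mpr ht₀)] at hz
  linarith

section BlockOperator

variable {E G : Type*} [NormedAddCommGroup E] [InnerProductSpace ℂ E]
  [NormedAddCommGroup G] [InnerProductSpace ℂ G]

@[simp]
lemma blockOp_apply_fst (D : E →L[ℂ] E) (C : G →L[ℂ] E) (B : E →L[ℂ] G) (F : G →L[ℂ] G)
    (x : WithLp 2 (E × G)) : (blockOp D C B F x).fst = D x.fst + C x.snd := rfl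

@[simp]
lemma blockOp_apply_snd (D : E →L[ℂ] E) (C : G →L[ℂ] E) (B : E →L[ℂ] G) (F : G →L[ℂ] G)
    (x : WithLp 2 (E × G)) : (blockOp D C B F x).snd = B x.fst + F x.snd := rfl

lemma ContinuousLinearMap.ext_withLp_prod {S T : WithLp 2 (E × G) →L[ℂ] WithLp 2 (E × G)}
    (h₁ : ∀ x, (S x).fst = (T x).fst) (h₂ : ∀ x, (S x).snd = (T x).snd) : S = T :=
  ext fun x => (WithLp.ext_iff 2).mpr (Prod.ext (h₁ x) (h₂ x))

lemma blockOp_mul_blockOp (D D' : E →L[ℂ] E) (C C' : G →L[ℂ] E) (B B' : E →L[ℂ] G)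
    (F F' : G →L[ℂ] G) :
    blockOp D C B F * blockOp D' C' B' F' =
      blockOp (D * D' + C ∘L B') (D ∘L C' + C ∘L F') (B ∘L D' + F ∘L B') (B ∘L C' + F * F') := by
  apply ext_withLp_prod <;> intro x <;> simp <;> abel

lemma blockOp_eq_one_iff {D : E →L[ℂ] E} {C : G →L[ℂ] E} {B : E →L[ℂ] G} {F : G →L[ℂ] G} :
    blockOp D C B F = 1 ↔ D = 1 ∧ C = 0 ∧ B = 0 ∧ F = 1 := by
  constructor
  · intro h
    have h₁ (m : E) := congrArg (·.fst) (DFunLike.congr_fun h (WithLp.toLp 2 (m, 0)))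
    have h₂ (k : G) := congrArg (·.fst) (DFunLike.congr_fun h (WithLp.toLp 2 (0, k)))
    have h₃ (m : E) := congrArg (·.snd) (DFunLike.congr_fun h (WithLp.toLp 2 (m, 0)))
    have h₄ (k : G) := congrArg (·.snd) (DFunLike.congr_fun h (WithLp.toLp 2 (0, k)))
    simp only [blockOp_apply_fst, blockOp_apply_snd, WithLp.toLp_fst, WithLp.toLp_snd, map_zero,
      add_zero, zero_add, one_apply_eq_self] at h₁ h₂ h₃ h₄
    exact ⟨ext h₁, ext h₂, ext h₃, ext h₄⟩
  · rintro ⟨rfl, rfl, rfl, rfl⟩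
    apply ext_withLp_prod <;> simp

end BlockOperator

lemma ContinuousLinearMap.norm_le_one_of_adjoint_comp_add_adjoint_comp_eq_one
    {𝕜 E F G : Type*} [RCLike 𝕜]
    [NormedAddCommGroup E] [InnerProductSpace 𝕜 E] [CompleteSpace E]
    [NormedAddCommGroup F] [InnerProductSpace 𝕜 F] [CompleteSpace F]
    [NormedAddCommGroup G] [InnerProductSpace 𝕜 G] [CompleteSpace G]
    {A : E →L[𝕜] F} {B : E →L[𝕜] G} (h : adjoint A ∘L A + adjoint B ∘L B = 1) : ‖A‖ ≤ 1 := by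
  refine opNorm_le_bound A zero_le_one fun x => ?_
  have hx : ‖A x‖ ^ 2 + ‖B x‖ ^ 2 = ‖x‖ ^ 2 := by
    rw [apply_norm_sq_eq_inner_adjoint_left, apply_norm_sq_eq_inner_adjoint_left, ← map_add,
      ← inner_add_left, ← add_apply, h, one_apply_eq_self, inner_self_eq_norm_sq]
  nlinarith [norm_nonneg (A x), norm_nonneg x]

section Algebra

variable {R A : Type*} [CommRing R] [Ring A] [Algebra R A]

lemma add_smul_inverse_mul_one_sub_mul_self {d : A} {z : R} (hu : IsUnit (1 + z • d)) :
    d + z • (Ring.inverse (1 + z • d) * (1 - d * d)) = (z • 1 + d) * Ring.inverse (1 + z • d) := by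
  obtain ⟨u, hu⟩ := hu
  have hcomm : Commute (↑u⁻¹ : A) d :=
    Commute.units_inv_left (hu ▸ ((Commute.one_left d).add_left ((Commute.refl d).smul_left z)))
  rw [← hu, Ring.inverse_unit]
  calc d + z • (↑u⁻¹ * (1 - d * d)) = ↑u⁻¹ * (↑u * d + z • (1 - d * d)) := by
        rw [mul_add, ← mul_assoc, Units.inv_mul, one_mul, mul_smul_comm]
    _ = ↑u⁻¹ * (z • 1 + d) := by
        rw [hu]; congr 1; simp only [add_mul, one_mul, smul_mul_assoc, smul_sub]; abel
    _ = (z • 1 + d) * ↑u⁻¹ :=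
        ((Commute.smul_left (Commute.one_left _) z).add_left hcomm.symm).eq.symm

end Algebra

section Intertwining

variable {𝕜 E G : Type*} [NontriviallyNormedField 𝕜] [NormedAddCommGroup E] [NormedSpace 𝕜 E]
  [NormedAddCommGroup G] [NormedSpace 𝕜 G]

lemma ContinuousLinearMap.comp_inverse_eq_inverse_comp {a : G →L[𝕜] G} {b : E →L[𝕜] E}
    {c : G →L[𝕜] E} (ha : IsUnit a) (hb : IsUnit b) (h : c ∘L a = b ∘L c) :
    c ∘L Ring.inverse a = Ring.inverse b ∘L c := by
  obtain ⟨u, rfl⟩ := ha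
  obtain ⟨v, rfl⟩ := hb
  rw [Ring.inverse_unit, Ring.inverse_unit]
  calc c ∘L ↑u⁻¹ = ((↑v⁻¹ * ↑v : E →L[𝕜] E) ∘L c) ∘L ↑u⁻¹ := by
        rw [Units.inv_mul, one_def, id_comp]
    _ = ↑v⁻¹ ∘L ((c ∘L (u : G →L[𝕜] G)) ∘L ↑u⁻¹) := by rw [h]; rfl
    _ = ↑v⁻¹ ∘L c := by rw [comp_assoc, ← mul_def, Units.mul_inv, one_def, comp_id]

lemma add_smul_comp_inverse_comp_eq {D : E →L[𝕜] E} {C : G →L[𝕜] E} {B : E →L[𝕜] G}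
    {F : G →L[𝕜] G} (hDD : D * D + C ∘L B = 1) (hDC : D ∘L C + C ∘L F = 0) {z : 𝕜}
    (hF : IsUnit (1 - z • F)) (hD : IsUnit (1 + z • D)) :
    D + z • (C ∘L Ring.inverse (1 - z • F) ∘L B) = (z • 1 + D) * Ring.inverse (1 + z • D) := by
  have hint : C ∘L (1 - z • F) = (1 + z • D) ∘L C := by
    ext x
    have hx := DFunLike.congr_fun hDC x
    simp only [add_apply, sub_apply, smul_apply, zero_apply, comp_apply, one_apply_eq_self,
      comp_sub, comp_smulₛₗ, RingHom.id_apply, add_comp, smul_comp] at hx ⊢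
    linear_combination (norm := module) (-z) • hx
  rw [← comp_assoc, comp_inverse_eq_inverse_comp hF hD hint, comp_assoc, eq_sub_of_add_eq' hDD]
  exact add_smul_inverse_mul_one_sub_mul_self hD

end Intertwining

lemma star_mul_inverse_mem_unitary {R : Type*} [Ring R] [StarRing R] {a : R} [IsStarNormal a]
    (ha : IsUnit a) : star a * Ring.inverse a ∈ unitary R := by
  obtain ⟨u, rfl⟩ := ha
  have hn : Commute (star (u : R)) u := IsStarNormal.star_comm_self
  have hc : Commute (↑u⁻¹ : R) (star ↑u) := hn.symm.units_inv_left
  rw [Ring.inverse_unit, Unitary.mem_iff, star_mul, star_star]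
  constructor
  · calc star (↑u⁻¹ : R) * ↑u * (star ↑u * ↑u⁻¹)
          = star (↑u⁻¹ : R) * (star ↑u * ↑u) * ↑u⁻¹ := by
          rw [mul_assoc, ← mul_assoc (↑u : R), ← hn.eq]; simp only [mul_assoc]
      _ = 1 := by rw [← mul_assoc, ← star_mul, Units.mul_inv, star_one, one_mul, Units.mul_inv]
  · calc star (↑u : R) * ↑u⁻¹ * (star ↑u⁻¹ * ↑u) = ↑u⁻¹ * (star ↑u * star ↑u⁻¹) * ↑u := by
          rw [← hc.eq]; simp only [mul_assoc]
      _ = 1 := by rw [← star_mul, Units.inv_mul, star_one, mul_one, Units.inv_mul]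

lemma IsSelfAdjoint.smul_one_add_mul_inverse_mem_unitary {A : Type*} [Ring A] [StarRing A]
    [Algebra ℂ A] [StarModule ℂ A] {d : A} (hd : IsSelfAdjoint d) {ξ : ℂ} (hξ : ‖ξ‖ = 1)
    (hu : IsUnit (1 + ξ • d)) : (ξ • 1 + d) * Ring.inverse (1 + ξ • d) ∈ unitary A := by
  have hξu : ξ ∈ unitary ℂ := by
    rw [Unitary.mem_iff_star_mul_self, Complex.star_def, conj_mul', hξ]; simp
  have hstar : star (1 + ξ • d) = 1 + star ξ • d := by
    rw [star_add, star_one, star_smul, hd.star_eq]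
  have hnormal : IsStarNormal (1 + ξ • d) := ⟨by
    rw [hstar]
    exact ((Commute.one_left _).add_left ((Commute.one_right _).add_right
      ((Commute.refl d).smul_left _ |>.smul_right _)))⟩
  have hmob : ξ • 1 + d = ξ • star (1 + ξ • d) := by
    rw [hstar, smul_add, smul_smul, Unitary.mul_star_self_of_mem hξu, one_smul]
  rw [hmob, smul_mul_assoc]
  exact Unitary.smul_mem_of_mem hξu (star_mul_inverse_mem_unitary hu)

/-- If the block operator `T = [[D, C], [C*, F]]` on `M ⊕ K` (with
`D = D*`, `F = F*`) is selfadjoint and unitary, then for every `z ∈ Z` the operators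
`I − zF` and `I + zD` are boundedly invertible, the transfer function satisfies
`D + zC(I − zF)⁻¹C* = (zI + D)(I + zD)⁻¹`, and it takes unitary values at every point `ξ`
of the unit circle with `ξ ≠ ±1`. -/
theorem conservative_selfadjoint_transfer (D : M →L[ℂ] M) (C : K →L[ℂ] M) (F : K →L[ℂ] K)
    (hD : IsSelfAdjoint D) (hF : IsSelfAdjoint F)
    (hTsa : IsSelfAdjoint (blockOp D C (adjoint C) F))
    (hTun : blockOp D C (adjoint C) F ∈
      unitary (WithLp 2 (M × K) →L[ℂ] WithLp 2 (M × K))) :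
    (∀ z ∈ Zdom,
      IsUnit ((1 : K →L[ℂ] K) - z • F) ∧ IsUnit ((1 : M →L[ℂ] M) + z • D) ∧
      D + z • (C ∘L Ring.inverse ((1 : K →L[ℂ] K) - z • F) ∘L adjoint C) =
        (z • (1 : M →L[ℂ] M) + D) * Ring.inverse ((1 : M →L[ℂ] M) + z • D)) ∧
    (∀ ξ : ℂ, ‖ξ‖ = 1 → ξ ≠ 1 → ξ ≠ -1 →
      D + ξ • (C ∘L Ring.inverse ((1 : K →L[ℂ] K) - ξ • F) ∘L adjoint C) ∈
        unitary (M →L[ℂ] M)) := by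
  have hT2 := Unitary.star_mul_self_of_mem hTun
  rw [hTsa.star_eq, blockOp_mul_blockOp, blockOp_eq_one_iff] at hT2
  obtain ⟨hDD, hDC, -, hFF⟩ := hT2
  have hD₁ : ‖D‖ ≤ 1 :=
    norm_le_one_of_adjoint_comp_add_adjoint_comp_eq_one (B := adjoint C)
      (by rwa [hD.adjoint_eq, adjoint_adjoint])
  have hF₁ : ‖F‖ ≤ 1 :=
    norm_le_one_of_adjoint_comp_add_adjoint_comp_eq_one (B := C)
      (by rwa [hF.adjoint_eq, add_comm])
  have transfer (z : ℂ) (hz : z ∈ Zdom) :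
      IsUnit ((1 : K →L[ℂ] K) - z • F) ∧ IsUnit ((1 : M →L[ℂ] M) + z • D) ∧
      D + z • (C ∘L Ring.inverse ((1 : K →L[ℂ] K) - z • F) ∘L adjoint C) =
        (z • (1 : M →L[ℂ] M) + D) * Ring.inverse ((1 : M →L[ℂ] M) + z • D) := by
    have hFu := hF.isUnit_one_sub_smul hF₁ hz
    have hDu : IsUnit ((1 : M →L[ℂ] M) + z • D) := by
      simpa using hD.neg.isUnit_one_sub_smul (by rwa [norm_neg]) hz
    exact ⟨hFu, hDu, add_smul_comp_inverse_comp_eq hDD hDC hFu hDu⟩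
  refine ⟨transfer, fun ξ hξ h₁ h₂ => ?_⟩
  obtain ⟨-, hDu, heq⟩ := transfer ξ (mem_Zdom_of_norm_eq_one hξ h₁ h₂)
  rw [heq]
  exact hD.smul_one_add_mul_inverse_mem_unitary hξ hDu
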